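/- Let S : ℝⁿ ⇉ ℝᵐ, X ⊆ ℝⁿ closed and convex, (x̄, ū) ∈ graph S with x̄ ∈ X, and suppose graph S is locally closed at (x̄, ū). Then S has the Lipschitz-like property relative to X at x̄ for ū if and only if there exists κ ≥ 0 such that for all (x, u) ∈ graph(S|_X) close enough to (x̄, ū), every (x*, -u*) in the limiting normal cone to graph(S|_X) at (x, u) satisfies ‖proj_{T_X(x)}(x*)‖ ≤ κ‖u*‖. -/

import Mathlib

open Filter Metric Set
open scoped Topology RealInnerProductSpace

noncomputable section

abbrev Eu (n : ℕ) := EuclideanSpace ℝ (Fin n)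

section GeneralDefs

variable {E F : Type*} [NormedAddCommGroup E] [NormedSpace ℝ E]
  [NormedAddCommGroup F] [NormedSpace ℝ F]

/-- `v` is a proximal normal vector to `A` at `a`: for some `t > 0`,
`a` is a nearest point of `A` to `a + t • v`. -/
def proxNormal (A : Set E) (a : E) : Set E :=
  {v | ∃ t : ℝ, 0 < t ∧ ‖t • v‖ = Metric.infDist (a + t • v) A}

/-- the set of nearest points of `K` to `x` (metric projection). -/
def projSet (K : Set E) (x : E) : Set E :=
  {y | y ∈ K ∧ ∀ z ∈ K, ‖x - y‖ ≤ ‖x - z‖}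

/-- the contingent (tangent) cone to `X` at `x`. -/
def tangCone (X : Set E) (x : E) : Set E :=
  {w | ∃ (t : ℕ → ℝ) (v : ℕ → E), (∀ k, 0 < t k) ∧ Tendsto t atTop (𝓝 0) ∧
    Tendsto v atTop (𝓝 w) ∧ ∀ k, x + t k • v k ∈ X}

/-- `A` is locally closed at `a`. -/
def LocallyClosedAt (A : Set E) (a : E) : Prop := ∃ U ∈ 𝓝 a, IsClosed (A ∩ U)

/-- the graph of the restriction `S|_X`. -/
def svGraph (S : E → Set F) (X : Set E) : Set (E × F) := {p | p.1 ∈ X ∧ p.2 ∈ S p.1}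

/-- the Lipschitz-like property of `S` relative to `X` at `x₀` for `u₀` with constant `κ`. -/
def LipschitzLikeRel (S : E → Set F) (X : Set E) (x₀ : E) (u₀ : F) (κ : ℝ) : Prop :=
  LocallyClosedAt (svGraph S univ) (x₀, u₀) ∧
  ∃ V ∈ 𝓝 x₀, ∃ W ∈ 𝓝 u₀, ∀ x ∈ X ∩ V, ∀ x' ∈ X ∩ V, ∀ u ∈ S x' ∩ W,
    ∃ u'' ∈ S x, ‖u - u''‖ ≤ κ * ‖x' - x‖

/-- the graphical modulus of `S` relative to `X` at `x₀` for `u₀` (as an extended real,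
the infimum of all Lipschitz-like constants). -/
def gmod (S : E → Set F) (X : Set E) (x₀ : E) (u₀ : F) : EReal :=
  sInf {c : EReal | ∃ κ : ℝ, 0 ≤ κ ∧ c = (κ : EReal) ∧
    ∃ V ∈ 𝓝 x₀, ∃ W ∈ 𝓝 u₀, ∀ x ∈ X ∩ V, ∀ x' ∈ X ∩ V, ∀ u ∈ S x' ∩ W,
      ∃ u'' ∈ S x, ‖u - u''‖ ≤ κ * ‖x' - x‖}

/-- the horizon cone of `A`. -/
def horizonCone (A : Set E) : Set E :=
  {w | ∃ (a : ℕ → E) (l : ℕ → ℝ), (∀ k, a k ∈ A) ∧ (∀ k, 0 < l k) ∧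
    Tendsto l atTop (𝓝 0) ∧ Tendsto (fun k => l k • a k) atTop (𝓝 w)}

/-- extended-real absolute difference `|a - b|`. -/
def eabsdiff (a b : EReal) : EReal := max (a - b) (b - a)

/-- `f` is locally Lipschitz continuous at `x₀` relative to `X`. -/
def RelLipschitzAt (f : E → EReal) (X : Set E) (x₀ : E) : Prop :=
  ∃ κ : ℝ, 0 ≤ κ ∧ ∃ V ∈ 𝓝 x₀, ∀ x ∈ X ∩ V, ∀ y ∈ X ∩ V,
    eabsdiff (f x) (f y) ≤ ((κ * ‖x - y‖ : ℝ) : EReal)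

/-- the Lipschitz modulus of `f` at `x₀` relative to `X` (as an extended real). -/
def relLipMod (f : E → EReal) (X : Set E) (x₀ : E) : EReal :=
  sInf {c : EReal | ∃ κ : ℝ, 0 ≤ κ ∧ c = (κ : EReal) ∧ ∃ V ∈ 𝓝 x₀,
    ∀ x ∈ X ∩ V, ∀ y ∈ X ∩ V, eabsdiff (f x) (f y) ≤ ((κ * ‖x - y‖ : ℝ) : EReal)}

end GeneralDefs

section InnerDefs

variable {E F : Type*} [NormedAddCommGroup E] [InnerProductSpace ℝ E]
  [NormedAddCommGroup F] [InnerProductSpace ℝ F]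

/-- the regular (Fréchet) normal cone to `A ⊆ E × F` at `a`. -/
def regNormalP (A : Set (E × F)) (a : E × F) : Set (E × F) :=
  {v | ∀ ε : ℝ, 0 < ε → ∃ δ > 0, ∀ b ∈ A, ‖b - a‖ ≤ δ →
    ⟪v.1, b.1 - a.1⟫ + ⟪v.2, b.2 - a.2⟫ ≤ ε * ‖b - a‖}

/-- the limiting (Mordukhovich) normal cone to `A ⊆ E × F` at `a`. -/
def limNormalP (A : Set (E × F)) (a : E × F) : Set (E × F) :=
  {v | ∃ (b : ℕ → E × F) (w : ℕ → E × F), (∀ k, b k ∈ A) ∧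
    (∀ k, w k ∈ regNormalP A (b k)) ∧ Tendsto b atTop (𝓝 a) ∧ Tendsto w atTop (𝓝 v)}

/-- the limiting coderivative of `S` at `x` for `u`:
`xs ∈ coderiv S x u us ↔ (xs, -us) ∈ N_{graph S}(x, u)`. -/
def coderiv (S : E → Set F) (x : E) (u : F) (us : F) : Set E :=
  {xs | (xs, -us) ∈ limNormalP (svGraph S univ) (x, u)}

/-- the projectional coderivative of `S` at `x₀` for `u₀` with respect to `X`. -/
def projCoderiv (S : E → Set F) (X : Set E) (x₀ : E) (u₀ : F) (us : F) : Set E :=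
  {xs | ∃ (x : ℕ → E) (u : ℕ → F) (xv : ℕ → E) (uv : ℕ → F) (y : ℕ → E),
    (∀ k, (x k, u k) ∈ svGraph S X) ∧
    (∀ k, (xv k, -(uv k)) ∈ limNormalP (svGraph S X) (x k, u k)) ∧
    (∀ k, y k ∈ projSet (tangCone X (x k)) (xv k)) ∧
    Tendsto x atTop (𝓝 x₀) ∧ Tendsto u atTop (𝓝 u₀) ∧
    Tendsto uv atTop (𝓝 us) ∧ Tendsto y atTop (𝓝 xs)}

/-- the regular (Fréchet) subdifferential of an extended-real-valued function. -/
def regSubdiff (g : E → EReal) (x : E) : Set E :=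
  {v | ∀ ε : ℝ, 0 < ε → ∃ δ > 0, ∀ y, ‖y - x‖ ≤ δ →
    g x + ((⟪v, y - x⟫ - ε * ‖y - x‖ : ℝ) : EReal) ≤ g y}

/-- the limiting (Mordukhovich) subdifferential. -/
def limSubdiff (g : E → EReal) (x : E) : Set E :=
  {v | ∃ (xk vk : ℕ → E), Tendsto xk atTop (𝓝 x) ∧
    Tendsto (fun k => g (xk k)) atTop (𝓝 (g x)) ∧
    (∀ k, vk k ∈ regSubdiff g (xk k)) ∧ Tendsto vk atTop (𝓝 v)}

/-- the horizon (singular) subdifferential. -/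
def horizonSubdiff (g : E → EReal) (x : E) : Set E :=
  {v | ∃ (xk vk : ℕ → E) (lk : ℕ → ℝ), Tendsto xk atTop (𝓝 x) ∧
    Tendsto (fun k => g (xk k)) atTop (𝓝 (g x)) ∧ (∀ k, 0 < lk k) ∧
    Tendsto lk atTop (𝓝 0) ∧ (∀ k, vk k ∈ regSubdiff g (xk k)) ∧
    Tendsto (fun k => lk k • vk k) atTop (𝓝 v)}

/-- the outer limiting subdifferential of `g` at `xb` with respect to `vb`. -/
def outerSubdiffWrt (g : E → EReal) (xb vb : E) : Set E :=
  {v | ∃ (xk vk : ℕ → E), Tendsto xk atTop (𝓝 xb) ∧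
    Tendsto (fun k => g (xk k)) atTop (𝓝 (g xb)) ∧
    (∀ k, g xb + ((⟪vb, xk k - xb⟫ : ℝ) : EReal) < g (xk k)) ∧
    (∀ k, vk k ∈ limSubdiff g (xk k)) ∧ Tendsto vk atTop (𝓝 v)}

/-- `D` is a convex polyhedron (finite intersection of closed half-spaces). -/
def IsPolyhedral (D : Set E) : Prop :=
  ∃ s : Finset (E × ℝ), D = {v | ∀ p ∈ s, ⟪p.1, v⟫ ≤ p.2}

/-- the support function of `D`. -/
def supportFn (D : Set E) : E → EReal :=
  fun x => sSup ((fun v => ((⟪v, x⟫ : ℝ) : EReal)) '' D)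

end InnerDefs


/-!
Necessity: the Aubin inclusion lets one move from `(x, u)` along a segment `x + t (z - x)` in
`X` while `u` moves by at most `κ t ‖z - x‖`. Testing a regular normal `(x*, -u*)` against such
curves gives `⟪x*, z - x⟫ ≤ κ ‖u*‖ ‖z - x‖` for `z ∈ X`; this closed condition passes to
limiting normals and, by positive homogeneity, to the tangent cone `T_X(x)`. The projection `y`
of `x*` onto a cone satisfies `⟪x*, y⟫ = ‖y‖²`, whence `‖y‖ ≤ κ ‖u*‖`.

Sufficiency: given `x, x' ∈ X` and `u ∈ S x'` near `(x̄, ū)`, minimize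
`‖b.1 - x‖² + ‖b.2 - u‖² / (2κ + 2)²` over a compact piece of `graph S|_X` (local closedness).
The minimizer `a` carries the proximal normal `(x - a.1, ·)`, and `x - a.1 ∈ T_X(a.1)` is its
own projection, so the hypothesis halves the distance to `x` at the price of moving `u` by
`(2κ + 2)` times that distance. Iterating yields a Cauchy sequence converging to some `(x, u'')`
with `‖u - u''‖ ≤ (4κ + 4) ‖x' - x‖`.
-/

section TangentCone

variable {E : Type*} [NormedAddCommGroup E] [NormedSpace ℝ E] {X : Set E} {x : E}

lemma sub_mem_tangCone (hX : Convex ℝ X) (hx : x ∈ X) {z : E} (hz : z ∈ X) :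
    z - x ∈ tangCone X x := by
  refine ⟨fun k => 1 / (k + 1), fun _ => z - x, fun k => by positivity,
    tendsto_one_div_add_atTop_nhds_zero_nat, tendsto_const_nhds, fun k => ?_⟩
  have hk : (1 : ℝ) / (k + 1) ≤ 1 := div_le_one_of_le₀ (by linarith [k.cast_nonneg (α := ℝ)])
    (by positivity)
  simpa only [add_sub_add_comm, smul_sub, add_sub_cancel] using
    hX.add_smul_sub_mem hx hz ⟨by positivity, hk⟩

lemma smul_mem_tangCone {w : E} (hw : w ∈ tangCone X x) {c : ℝ} (hc : 0 < c) :
    c • w ∈ tangCone X x := by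
  obtain ⟨t, v, ht, ht0, hv, hmem⟩ := hw
  refine ⟨fun k => t k / c, fun k => c • v k, fun k => div_pos (ht k) hc,
    by simpa using ht0.div_const c, hv.const_smul c, fun k => ?_⟩
  rw [smul_smul, div_mul_cancel₀ _ hc.ne']
  exact hmem k

end TangentCone

section ProjectionOntoTangentCone

variable {E : Type*} [NormedAddCommGroup E] [InnerProductSpace ℝ E] {X : Set E} {x : E}

lemma inner_le_of_mem_tangCone {v : E} {c : ℝ} (h : ∀ z ∈ X, ⟪v, z - x⟫ ≤ c * ‖z - x‖)
    {w : E} (hw : w ∈ tangCone X x) : ⟪v, w⟫ ≤ c * ‖w‖ := by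
  obtain ⟨t, u, ht, -, hu, hmem⟩ := hw
  have hk : ∀ k, ⟪v, u k⟫ ≤ c * ‖u k‖ := fun k => by
    have := h _ (hmem k)
    rw [add_sub_cancel_left, real_inner_smul_right, norm_smul, Real.norm_of_nonneg (ht k).le,
      mul_left_comm] at this
    exact le_of_mul_le_mul_left this (ht k)
  exact le_of_tendsto_of_tendsto' (tendsto_const_nhds.inner hu)
    (tendsto_const_nhds.mul hu.norm) hk

/-- First-order optimality of `y` along the ray `ℝ₊ y`. -/
lemma inner_eq_norm_sq_of_mem_projSet {K : Set E} {v y : E} (hy : y ∈ projSet K v)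
    (hK : ∀ c : ℝ, 0 < c → c • y ∈ K) : ⟪v, y⟫ = ‖y‖ ^ 2 := by
  set g : ℝ → ℝ := fun c => ‖v - c • y‖ ^ 2
  have hg : g = fun c => ‖v‖ ^ 2 - 2 * (c * ⟪v, y⟫) + c ^ 2 * ‖y‖ ^ 2 := by
    ext c
    simp only [g, norm_sub_sq_real, real_inner_smul_right, norm_smul, Real.norm_eq_abs,
      mul_pow, sq_abs]
  have hmin : IsLocalMin g 1 := by
    filter_upwards [lt_mem_nhds one_pos] with c hc
    simpa only [g, one_smul] using pow_le_pow_left₀ (norm_nonneg _) (hy.2 _ (hK c hc)) 2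
  have hderiv : HasDerivAt g (-2 * ⟪v, y⟫ + 2 * ‖y‖ ^ 2) 1 := by
    have := (((hasDerivAt_id' (1 : ℝ)).mul_const ⟪v, y⟫).const_mul 2).const_sub (‖v‖ ^ 2)
      |>.add ((hasDerivAt_pow 2 (1 : ℝ)).mul_const (‖y‖ ^ 2))
    rw [hg]
    exact this.congr_deriv (by norm_num)
  linarith [hmin.hasDerivAt_eq_zero hderiv]

lemma norm_le_of_mem_projSet_tangCone {v : E} {c : ℝ} (hc : 0 ≤ c)
    (h : ∀ z ∈ X, ⟪v, z - x⟫ ≤ c * ‖z - x‖) {y : E} (hy : y ∈ projSet (tangCone X x) v) :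
    ‖y‖ ≤ c := by
  have hy' := inner_le_of_mem_tangCone h hy.1
  rw [inner_eq_norm_sq_of_mem_projSet hy fun c hc => smul_mem_tangCone hy.1 hc, sq] at hy'
  rcases (norm_nonneg y).eq_or_lt with h0 | h0
  · rwa [← h0]
  · exact le_of_mul_le_mul_right hy' h0

end ProjectionOntoTangentCone

section Graph

variable {E F : Type*} [NormedAddCommGroup E] [NormedAddCommGroup F]

def LipschitzLikeOn (S : E → Set F) (X V : Set E) (W : Set F) (κ : ℝ) : Prop :=
  ∀ x ∈ X ∩ V, ∀ x' ∈ X ∩ V, ∀ u ∈ S x' ∩ W, ∃ u'' ∈ S x, ‖u - u''‖ ≤ κ * ‖x' - x‖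

lemma LocallyClosedAt.exists_isClosed_svGraph_inter_closedBall {S : E → Set F} {X : Set E}
    (hX : IsClosed X) {p : E × F} (hloc : LocallyClosedAt (svGraph S univ) p) :
    ∃ ε > 0, ∀ r < ε, IsClosed (svGraph S X ∩ closedBall p r) := by
  obtain ⟨U, hU, hUcl⟩ := hloc
  obtain ⟨ε, hε, hεU⟩ := Metric.mem_nhds_iff.1 hU
  refine ⟨ε, hε, fun r hr => ?_⟩
  have : svGraph S X ∩ closedBall p r =
      (svGraph S univ ∩ U) ∩ ((X ×ˢ univ) ∩ closedBall p r) := by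
    ext b
    simp only [svGraph, mem_inter_iff, mem_ofPred_eq, mem_prod, mem_univ, true_and, and_true]
    exact ⟨fun ⟨⟨hbX, hbS⟩, hb⟩ => ⟨⟨hbS, hεU (closedBall_subset_ball hr hb)⟩, hbX, hb⟩,
      fun ⟨⟨hbS, _⟩, hbX, hb⟩ => ⟨⟨hbX, hbS⟩, hb⟩⟩
  rw [this]
  exact hUcl.inter ((hX.prod isClosed_univ).inter isClosed_closedBall)

end Graph

section Normals

variable {E F : Type*} [NormedAddCommGroup E] [InnerProductSpace ℝ E]
  [NormedAddCommGroup F] [InnerProductSpace ℝ F] {A : Set (E × F)}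

lemma regNormalP_subset_limNormalP {a : E × F} (ha : a ∈ A) :
    regNormalP A a ⊆ limNormalP A a := fun w hw =>
  ⟨fun _ => a, fun _ => w, fun _ => ha, fun _ => hw, tendsto_const_nhds, tendsto_const_nhds⟩

lemma mem_of_mem_limNormalP {C : Set ((E × F) × (E × F))} (hC : IsClosed C) {a v : E × F}
    (hreg : ∀ᶠ b in 𝓝 a, b ∈ A → ∀ w ∈ regNormalP A b, (b, w) ∈ C)
    (hv : v ∈ limNormalP A a) : (a, v) ∈ C := by
  obtain ⟨b, w, hbA, hw, hb, hwv⟩ := hv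
  exact hC.mem_of_tendsto (hb.prodMk_nhds hwv)
    ((hb.eventually hreg).mono fun k hk => hk (hbA k) _ (hw k))

lemma inner_fst_le_of_mem_regNormalP {a w : E × F} (hw : w ∈ regNormalP A a) {d : E}
    {L t₀ : ℝ} (ht₀ : 0 < t₀)
    (hcurve : ∀ t ∈ Ioc 0 t₀, ∃ b ∈ A, b.1 = a.1 + t • d ∧ ‖b.2 - a.2‖ ≤ t * L) :
    ⟪w.1, d⟫ ≤ ‖w.2‖ * L := by
  have hL : 0 ≤ L := by
    obtain ⟨b, -, -, hb⟩ := hcurve t₀ ⟨ht₀, le_rfl⟩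
    exact nonneg_of_mul_nonneg_right ((norm_nonneg _).trans hb) ht₀
  refine le_of_forall_pos_le_add fun ε hε => ?_
  set C := ‖d‖ + L + 1
  have hC : 0 < C := by positivity
  obtain ⟨δ, hδ, hreg⟩ := hw (ε / C) (by positivity)
  set t := min t₀ (δ / C)
  have ht : 0 < t := lt_min ht₀ (by positivity)
  obtain ⟨b, hbA, hb1, hb2⟩ := hcurve t ⟨ht, min_le_left _ _⟩
  have hba : ‖b - a‖ ≤ t * C := by
    refine max_le ?_ ?_
    · rw [Prod.fst_sub, hb1, add_sub_cancel_left, norm_smul, Real.norm_of_nonneg ht.le]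
      gcongr
      linarith
    · exact hb2.trans (by gcongr; linarith [norm_nonneg d])
  have key := hreg b hbA (hba.trans ((le_div_iff₀ hC).1 (min_le_right _ _)))
  rw [hb1, add_sub_cancel_left, real_inner_smul_right] at key
  have hsnd : -(‖w.2‖ * (t * L)) ≤ ⟪w.2, b.2 - a.2⟫ :=
    neg_le_of_abs_le ((abs_real_inner_le_norm _ _).trans (by gcongr))
  have hrhs : ε / C * ‖b - a‖ ≤ t * ε := by
    calc ε / C * ‖b - a‖ ≤ ε / C * (t * C) := by gcongr
      _ = t * ε := by field_simp
  have : t * ⟪w.1, d⟫ ≤ t * (‖w.2‖ * L + ε) := by linarith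
  exact le_of_mul_le_mul_left this ht

lemma mem_regNormalP_of_eventually_inner_le {a w : E × F} {C : ℝ} (hC : 0 < C)
    (h : ∀ᶠ b in 𝓝[A] a, ⟪w.1, b.1 - a.1⟫ + ⟪w.2, b.2 - a.2⟫ ≤ C * ‖b - a‖ ^ 2) :
    w ∈ regNormalP A a := by
  intro ε hε
  obtain ⟨δ, hδ, hball⟩ := Metric.mem_nhdsWithin_iff.1 h
  refine ⟨min (δ / 2) (ε / C), by positivity, fun b hbA hba => ?_⟩
  have hb : dist b a < δ := by
    rw [dist_eq_norm]
    linarith [hba.trans (min_le_left _ _)]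
  calc _ ≤ C * ‖b - a‖ ^ 2 := hball ⟨hb, hbA⟩
    _ = (C * ‖b - a‖) * ‖b - a‖ := by ring
    _ ≤ ε * ‖b - a‖ := by
      gcongr
      exact (le_div_iff₀' hC).1 (hba.trans (min_le_right _ _))

lemma mem_regNormalP_of_isLocalMinOn {a : E × F} {x : E} {v : F} {μ : ℝ} (hμ : 0 ≤ μ)
    (hmin : IsLocalMinOn (fun b : E × F => ‖b.1 - x‖ ^ 2 + μ * ‖b.2 - v‖ ^ 2) A a) :
    (x - a.1, μ • (v - a.2)) ∈ regNormalP A a := by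
  refine mem_regNormalP_of_eventually_inner_le (C := (1 + μ) / 2) (by positivity) ?_
  filter_upwards [hmin] with b hb
  have e1 : ‖b.1 - x‖ ^ 2 = ‖b.1 - a.1‖ ^ 2 - 2 * ⟪x - a.1, b.1 - a.1⟫ + ‖a.1 - x‖ ^ 2 := by
    rw [show b.1 - x = (b.1 - a.1) - (x - a.1) by abel, norm_sub_sq_real, real_inner_comm,
      norm_sub_rev x]
  have e2 : ‖b.2 - v‖ ^ 2 = ‖b.2 - a.2‖ ^ 2 - 2 * ⟪v - a.2, b.2 - a.2⟫ + ‖a.2 - v‖ ^ 2 := by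
    rw [show b.2 - v = (b.2 - a.2) - (v - a.2) by abel, norm_sub_sq_real, real_inner_comm,
      norm_sub_rev v]
  have h1 : ‖b.1 - a.1‖ ^ 2 ≤ ‖b - a‖ ^ 2 := by gcongr; exact norm_fst_le (b - a)
  have h2 : μ * ‖b.2 - a.2‖ ^ 2 ≤ μ * ‖b - a‖ ^ 2 := by gcongr; exact norm_snd_le (b - a)
  simp only [e1, e2] at hb
  rw [real_inner_smul_left]
  linarith

def ProjNormalBound (S : E → Set F) (X : Set E) (κ : ℝ) (p : E × F) : Prop :=
  ∀ xs us, (xs, -us) ∈ limNormalP (svGraph S X) p →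
    ∀ y ∈ projSet (tangCone X p.1) xs, ‖y‖ ≤ κ * ‖us‖

end Normals

section Necessity

variable {E F : Type*} [NormedAddCommGroup E] [InnerProductSpace ℝ E]
  [NormedAddCommGroup F] [InnerProductSpace ℝ F]
  {S : E → Set F} {X V : Set E} {W : Set F} {κ : ℝ}

lemma inner_le_of_mem_regNormalP_of_lipschitzLikeOn (hX : Convex ℝ X)
    (hS : LipschitzLikeOn S X V W κ) {q : E × F} (hq : q ∈ svGraph S X) (hV : V ∈ 𝓝 q.1)
    (hW : q.2 ∈ W) {w : E × F} (hw : w ∈ regNormalP (svGraph S X) q) {z : E} (hz : z ∈ X) :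
    ⟪w.1, z - q.1⟫ ≤ κ * ‖w.2‖ * ‖z - q.1‖ := by
  have hseg : ∀ᶠ t : ℝ in 𝓝 0, q.1 + t • (z - q.1) ∈ V := by
    have : Tendsto (fun t : ℝ => q.1 + t • (z - q.1)) (𝓝 0) (𝓝 q.1) := by
      simpa using ((tendsto_id (x := 𝓝 (0 : ℝ))).smul_const (z - q.1)).const_add q.1
    exact this hV
  obtain ⟨t₀, ht₀, hsegV⟩ := Metric.eventually_nhds_iff.1 hseg
  have := inner_fst_le_of_mem_regNormalP hw (lt_min (half_pos ht₀) one_pos)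
    (d := z - q.1) (L := κ * ‖z - q.1‖) fun t ht => ?_
  · linarith
  have hxt : q.1 + t • (z - q.1) ∈ X :=
    hX.add_smul_sub_mem hq.1 hz ⟨ht.1.le, ht.2.trans (min_le_right _ _)⟩
  have htV : q.1 + t • (z - q.1) ∈ V := hsegV (by
    rw [Real.dist_0_eq_abs, abs_of_pos ht.1]
    linarith [ht.2.trans (min_le_left _ _)])
  obtain ⟨u, hu, hdist⟩ := hS _ ⟨hxt, htV⟩ q.1 ⟨hq.1, mem_of_mem_nhds hV⟩ q.2 ⟨hq.2, hW⟩
  refine ⟨(_, u), ⟨hxt, hu⟩, rfl, ?_⟩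
  rw [norm_sub_rev]
  calc ‖q.2 - u‖ ≤ κ * ‖q.1 - (q.1 + t • (z - q.1))‖ := hdist
    _ = t * (κ * ‖z - q.1‖) := by
      rw [sub_add_cancel_left, norm_neg, norm_smul, Real.norm_of_nonneg ht.1.le]
      ring

lemma eventually_projNormalBound_of_lipschitzLikeOn (hX : Convex ℝ X) (hκ : 0 ≤ κ)
    {x₀ : E} {u₀ : F} (hV : V ∈ 𝓝 x₀) (hW : W ∈ 𝓝 u₀) (hS : LipschitzLikeOn S X V W κ) :
    ∀ᶠ p : E × F in 𝓝 (x₀, u₀), p ∈ svGraph S X → ProjNormalBound S X κ p := by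
  have hN : IsOpen (interior V ×ˢ interior W) := isOpen_interior.prod isOpen_interior
  filter_upwards [hN.mem_nhds ⟨mem_interior_iff_mem_nhds.2 hV, mem_interior_iff_mem_nhds.2 hW⟩]
    with p hp hpG xs us hlim y hy
  refine norm_le_of_mem_projSet_tangCone (by positivity) (fun z hz => ?_) hy
  set C := {bw : (E × F) × (E × F) | ⟪bw.2.1, z - bw.1.1⟫ ≤ κ * ‖bw.2.2‖ * ‖z - bw.1.1‖}
  have hC : IsClosed C := isClosed_le (by fun_prop) (by fun_prop)
  have hreg : ∀ᶠ b in 𝓝 p, b ∈ svGraph S X → ∀ w ∈ regNormalP (svGraph S X) b, (b, w) ∈ C := by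
    filter_upwards [hN.mem_nhds hp] with b hb hbG w hw
    exact inner_le_of_mem_regNormalP_of_lipschitzLikeOn hX hS hbG
      (mem_interior_iff_mem_nhds.1 hb.1) (interior_subset hb.2) hw hz
  simpa [C] using mem_of_mem_limNormalP hC hreg hlim

end Necessity

section Iteration

variable {E F : Type*} [NormedAddCommGroup E] [NormedAddCommGroup F] [CompleteSpace F]

/-- The increments of the second components are bounded by a geometric series. -/
lemma exists_mem_of_halving_steps {R : Set (E × F)} (hR : IsClosed R) {x : E} {L : ℝ}
    (hL : 0 ≤ L)
    (hstep : ∀ q ∈ R, ∃ q' ∈ R, ‖q'.1 - x‖ ≤ ‖q.1 - x‖ / 2 ∧ ‖q'.2 - q.2‖ ≤ L * ‖q.1 - x‖)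
    {p : E × F} (hp : p ∈ R) : ∃ u, (x, u) ∈ R ∧ ‖u - p.2‖ ≤ 2 * L * ‖p.1 - x‖ := by
  choose f hfR hf₁ hf₂ using hstep
  set g : R → R := fun q => ⟨f q q.2, hfR q q.2⟩
  set s : ℕ → E × F := fun j => (g^[j] ⟨p, hp⟩ : R)
  have hs : ∀ j, s (j + 1) = f (s j) (g^[j] ⟨p, hp⟩).2 := fun j => by
    simp only [s, Function.iterate_succ_apply']
    rfl
  have hs₁ : ∀ j, ‖(s j).1 - x‖ ≤ ‖p.1 - x‖ * (1 / 2) ^ j := by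
    intro j
    induction j with
    | zero => simp [s]
    | succ j ih =>
      rw [hs, pow_succ]
      linarith [hf₁ _ (g^[j] ⟨p, hp⟩).2]
  have hs₂ : ∀ j, dist (s j).2 (s (j + 1)).2 ≤ L * ‖p.1 - x‖ * (1 / 2) ^ j := by
    intro j
    rw [dist_comm, dist_eq_norm, hs, mul_assoc]
    exact (hf₂ _ (g^[j] ⟨p, hp⟩).2).trans (by gcongr; exact hs₁ j)
  obtain ⟨u, hu⟩ := cauchySeq_tendsto_of_complete
    (cauchySeq_of_le_geometric _ _ (by norm_num) hs₂)
  have hx : Tendsto (fun j => (s j).1) atTop (𝓝 x) := by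
    refine tendsto_iff_norm_sub_tendsto_zero.2 (squeeze_zero (fun _ => norm_nonneg _) hs₁ ?_)
    simpa using (tendsto_pow_atTop_nhds_zero_of_lt_one (r := (1 / 2 : ℝ)) (by norm_num)
      (by norm_num)).const_mul ‖p.1 - x‖
  refine ⟨u, hR.mem_of_tendsto (hx.prodMk_nhds hu) (Eventually.of_forall fun j => (g^[j] _).2), ?_⟩
  calc ‖u - p.2‖ = dist (s 0).2 u := by rw [dist_comm, dist_eq_norm]; rfl
    _ ≤ L * ‖p.1 - x‖ * (1 / 2) ^ 0 / (1 - 1 / 2) :=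
      dist_le_of_le_geometric_of_tendsto _ _ (by norm_num) hs₂ hu 0
    _ = 2 * L * ‖p.1 - x‖ := by ring

lemma exists_mem_of_halving_steps_within {K : Set (E × F)} (hK : IsClosed K) {x : E} {L : ℝ}
    (hL : 0 ≤ L) {p : E × F} (hp : p ∈ K)
    (hstep : ∀ q ∈ K, ‖q.2 - p.2‖ + 2 * L * ‖q.1 - x‖ ≤ 2 * L * ‖p.1 - x‖ →
      ∃ q' ∈ K, ‖q'.1 - x‖ ≤ ‖q.1 - x‖ / 2 ∧ ‖q'.2 - q.2‖ ≤ L * ‖q.1 - x‖) :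
    ∃ u, (x, u) ∈ K ∧ ‖u - p.2‖ ≤ 2 * L * ‖p.1 - x‖ := by
  set R := K ∩ {q | ‖q.2 - p.2‖ + 2 * L * ‖q.1 - x‖ ≤ 2 * L * ‖p.1 - x‖}
  have hstepR : ∀ q ∈ R, ∃ q' ∈ R,
      ‖q'.1 - x‖ ≤ ‖q.1 - x‖ / 2 ∧ ‖q'.2 - q.2‖ ≤ L * ‖q.1 - x‖ := by
    rintro q ⟨hqK, hq : ‖q.2 - p.2‖ + 2 * L * ‖q.1 - x‖ ≤ 2 * L * ‖p.1 - x‖⟩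
    obtain ⟨q', hq'K, hq'₁, hq'₂⟩ := hstep q hqK hq
    refine ⟨q', ⟨hq'K, ?_⟩, hq'₁, hq'₂⟩
    rw [mem_ofPred_eq]
    linarith [norm_sub_le_norm_sub_add_norm_sub q'.2 q.2 p.2,
      mul_le_mul_of_nonneg_left hq'₁ (by positivity : (0 : ℝ) ≤ 2 * L)]
  obtain ⟨u, ⟨hu, -⟩, hup⟩ := exists_mem_of_halving_steps
    (hK.inter (isClosed_le (by fun_prop) (by fun_prop))) hL hstepR (p := p) ⟨hp, by simp⟩
  exact ⟨u, hu, hup⟩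

end Iteration

section Sufficiency

variable {E F : Type*} [NormedAddCommGroup E] [InnerProductSpace ℝ E]
  [NormedAddCommGroup F] [InnerProductSpace ℝ F] {S : E → Set F} {X : Set E} {κ : ℝ}

lemma norm_sub_le_of_isLocalMinOn (hX : Convex ℝ X) {x : E} (hx : x ∈ X) {v : F} {μ : ℝ}
    (hμ : 0 < μ) {a : E × F} (ha : a ∈ svGraph S X)
    (hmin : IsLocalMinOn (fun b : E × F => ‖b.1 - x‖ ^ 2 + μ * ‖b.2 - v‖ ^ 2) (svGraph S X) a)
    (hbound : ProjNormalBound S X κ a) :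
    ‖a.1 - x‖ ≤ κ * μ * ‖a.2 - v‖ := by
  have hlim := regNormalP_subset_limNormalP ha (mem_regNormalP_of_isLocalMinOn hμ.le hmin)
  rw [← neg_sub a.2, smul_neg] at hlim
  have := hbound _ _ hlim (x - a.1) ⟨sub_mem_tangCone hX ha.1 hx, fun z _ => by simp⟩
  rwa [norm_sub_rev, norm_smul, Real.norm_of_nonneg hμ.le, ← mul_assoc] at this

/-- `q'` minimizes `‖b.1 - x‖² + ‖b.2 - q.2‖² / (2κ + 2)²` over the compact piece of the
graph. -/
lemma exists_halving_step [ProperSpace E] [ProperSpace F] (hX : Convex ℝ X) (hκ : 0 ≤ κ)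
    {x₀ : E} {u₀ : F} {r : ℝ} (hK : IsClosed (svGraph S X ∩ closedBall (x₀, u₀) r))
    (hbound : ∀ p ∈ svGraph S X, dist p (x₀, u₀) < r → ProjNormalBound S X κ p)
    {x : E} (hx : x ∈ X) {q : E × F} (hq : q ∈ svGraph S X ∩ closedBall (x₀, u₀) r)
    (h₁ : ‖q.1 - x‖ + dist x x₀ < r) (h₂ : (2 * κ + 2) * ‖q.1 - x‖ + dist q.2 u₀ < r) :
    ∃ q' ∈ svGraph S X ∩ closedBall (x₀, u₀) r,
      ‖q'.1 - x‖ ≤ ‖q.1 - x‖ / 2 ∧ ‖q'.2 - q.2‖ ≤ (2 * κ + 2) * ‖q.1 - x‖ := by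
  set L := 2 * κ + 2
  have hL : 0 < L := by positivity
  set φ := fun b : E × F => ‖b.1 - x‖ ^ 2 + (L ^ 2)⁻¹ * ‖b.2 - q.2‖ ^ 2
  obtain ⟨a, haK, hmin⟩ := ((isCompact_closedBall _ _).of_isClosed_subset hK
    inter_subset_right).exists_isMinOn ⟨q, hq⟩ (by fun_prop : Continuous φ).continuousOn
  have hφ : φ a ≤ ‖q.1 - x‖ ^ 2 := by simpa [φ] using hmin hq
  have ha₁ : ‖a.1 - x‖ ≤ ‖q.1 - x‖ :=
    (pow_le_pow_iff_left₀ (norm_nonneg _) (norm_nonneg _) two_ne_zero).1 (by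
      have : 0 ≤ (L ^ 2)⁻¹ * ‖a.2 - q.2‖ ^ 2 := by positivity
      simp only [φ] at hφ
      linarith)
  have ha₂ : ‖a.2 - q.2‖ ≤ L * ‖q.1 - x‖ := by
    rw [← div_le_iff₀' hL]
    refine (pow_le_pow_iff_left₀ (by positivity) (norm_nonneg _) two_ne_zero).1 ?_
    rw [div_pow, div_eq_inv_mul]
    simp only [φ] at hφ
    linarith [sq_nonneg ‖a.1 - x‖]
  have hac : dist a (x₀, u₀) < r := by
    rw [Prod.dist_eq]
    refine max_lt ?_ ?_
    · calc dist a.1 x₀ ≤ ‖a.1 - x‖ + dist x x₀ := by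
            rw [← dist_eq_norm]; exact dist_triangle _ _ _
        _ < r := by linarith
    · calc dist a.2 u₀ ≤ ‖a.2 - q.2‖ + dist q.2 u₀ := by
            rw [← dist_eq_norm]; exact dist_triangle _ _ _
        _ < r := by linarith
  have hloc : IsLocalMinOn φ (svGraph S X) a := hmin.filter_mono <| le_principal_iff.2 <|
    inter_mem_nhdsWithin _ (mem_of_superset (isOpen_ball.mem_nhds hac) ball_subset_closedBall)
  refine ⟨a, haK, ?_, ha₂⟩
  calc ‖a.1 - x‖ ≤ κ * (L ^ 2)⁻¹ * ‖a.2 - q.2‖ :=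
        norm_sub_le_of_isLocalMinOn hX hx (by positivity) haK.1 hloc (hbound a haK.1 hac)
    _ ≤ κ * (L ^ 2)⁻¹ * (L * ‖q.1 - x‖) := by gcongr
    _ = κ / L * ‖q.1 - x‖ := by field_simp
    _ ≤ 1 / 2 * ‖q.1 - x‖ := by
      gcongr ?_ * _
      rw [div_le_iff₀ hL]
      linarith
    _ = ‖q.1 - x‖ / 2 := by ring

lemma exists_lipschitzLikeOn_of_eventually_projNormalBound [ProperSpace E] [ProperSpace F]
    (hXc : IsClosed X) (hX : Convex ℝ X) (hκ : 0 ≤ κ) {x₀ : E} {u₀ : F}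
    (hloc : LocallyClosedAt (svGraph S univ) (x₀, u₀))
    (hbound : ∀ᶠ p in 𝓝 (x₀, u₀), p ∈ svGraph S X → ProjNormalBound S X κ p) :
    ∃ V ∈ 𝓝 x₀, ∃ W ∈ 𝓝 u₀, LipschitzLikeOn S X V W (2 * (2 * κ + 2)) := by
  set L := 2 * κ + 2
  have hL : 0 < L := by positivity
  obtain ⟨r₀, hr₀, hH⟩ := Metric.eventually_nhds_iff.1 hbound
  obtain ⟨r₁, hr₁, hcl⟩ := hloc.exists_isClosed_svGraph_inter_closedBall hXc
  set r := min r₀ (r₁ / 2)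
  have hK := hcl r ((min_le_right _ _).trans_lt (half_lt_self hr₁))
  -- the minimizers met along the way lie within `3 L t + ρ < (6 L + 3) ρ` of `(x₀, u₀)`
  set ρ := r / (6 * L + 3)
  have hρ : 0 < ρ := by positivity
  have hρr : r = (6 * L + 3) * ρ := by simp only [ρ]; field_simp
  refine ⟨ball x₀ ρ, ball_mem_nhds _ hρ, ball u₀ ρ, ball_mem_nhds _ hρ, ?_⟩
  rintro x ⟨hxX, hx⟩ x' ⟨hx'X, hx'⟩ u ⟨hu, hu'⟩
  rw [mem_ball] at hx hx' hu'
  set t := ‖x' - x‖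
  have ht : t < 2 * ρ := by simp only [t, ← dist_eq_norm]; linarith [dist_triangle_right x' x x₀]
  have hp : (x', u) ∈ svGraph S X ∩ closedBall (x₀, u₀) r := by
    refine ⟨⟨hx'X, hu⟩, ?_⟩
    rw [mem_closedBall, Prod.dist_eq]
    exact max_le (by linarith [mul_pos hL hρ]) (by linarith [mul_pos hL hρ])
  have hstep : ∀ q ∈ svGraph S X ∩ closedBall (x₀, u₀) r,
      ‖q.2 - u‖ + 2 * L * ‖q.1 - x‖ ≤ 2 * L * t → ∃ q' ∈ svGraph S X ∩ closedBall (x₀, u₀) r,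
        ‖q'.1 - x‖ ≤ ‖q.1 - x‖ / 2 ∧ ‖q'.2 - q.2‖ ≤ L * ‖q.1 - x‖ := by
    intro q hqK hq
    have hq₁ : ‖q.1 - x‖ ≤ t := le_of_mul_le_mul_left (by linarith [norm_nonneg (q.2 - u)])
      (by positivity : 0 < 2 * L)
    have hq₂ : ‖q.2 - u‖ ≤ 2 * L * t := by
      linarith [mul_nonneg (by positivity : (0 : ℝ) ≤ 2 * L) (norm_nonneg (q.1 - x))]
    exact exists_halving_step hX hκ hK (fun p hp hpd => hH (hpd.trans_le (min_le_left _ _)) hp)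
      hxX hqK (by linarith [mul_pos hL hρ])
      (by linarith [dist_triangle q.2 u u₀, dist_eq_norm q.2 u,
        mul_le_mul_of_nonneg_left hq₁ hL.le, mul_lt_mul_of_pos_left ht hL])
  obtain ⟨w, hw, hwu⟩ := exists_mem_of_halving_steps_within hK hL.le hp hstep
  exact ⟨w, hw.1.2, by rwa [norm_sub_rev]⟩

end Sufficiency

theorem lipschitzLikeRel_iff_proj_coderiv_bound_general {n m : ℕ} (S : Eu n → Set (Eu m))
    (X : Set (Eu n)) (xb : Eu n) (ub : Eu m) (hX : IsClosed X) (hXconv : Convex ℝ X)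
    (hloc : LocallyClosedAt (svGraph S univ) (xb, ub)) :
    (∃ κ : ℝ, 0 ≤ κ ∧ LipschitzLikeRel S X xb ub κ) ↔
    (∃ κ : ℝ, 0 ≤ κ ∧ ∀ᶠ p : Eu n × Eu m in 𝓝 (xb, ub), p ∈ svGraph S X →
      ∀ xs us, (xs, -us) ∈ limNormalP (svGraph S X) p →
        ∀ y ∈ projSet (tangCone X p.1) xs, ‖y‖ ≤ κ * ‖us‖) := by
  constructor
  · rintro ⟨κ, hκ, -, V, hV, W, hW, hS⟩
    exact ⟨κ, hκ, eventually_projNormalBound_of_lipschitzLikeOn hXconv hκ hV hW hS⟩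
  · rintro ⟨κ, hκ, hbound⟩
    obtain ⟨V, hV, W, hW, hS⟩ :=
      exists_lipschitzLikeOn_of_eventually_projNormalBound hX hXconv hκ hloc hbound
    exact ⟨_, by positivity, hloc, V, hV, W, hW, hS⟩

/-- Theorem 2.3: for `X` closed and convex, `S` has the Lipschitz-like
property relative to `X` at `x̄` for `ū` iff there is `κ ≥ 0` such that for all
`(x, u) ∈ graph S|_X` close enough to `(x̄, ū)`, every `(x*, -u*)` in the limiting normal
cone to `graph S|_X` at `(x, u)` satisfies `‖proj_{T_X(x)}(x*)‖ ≤ κ‖u*‖`. -/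
theorem lipschitzLikeRel_iff_proj_coderiv_bound {n m : ℕ} (S : Eu n → Set (Eu m))
    (X : Set (Eu n)) (xb : Eu n) (ub : Eu m) (hX : IsClosed X) (hXconv : Convex ℝ X)
    (hxb : xb ∈ X) (hub : ub ∈ S xb) (hloc : LocallyClosedAt (svGraph S univ) (xb, ub)) :
    (∃ κ : ℝ, 0 ≤ κ ∧ LipschitzLikeRel S X xb ub κ) ↔
    (∃ κ : ℝ, 0 ≤ κ ∧ ∀ᶠ p : Eu n × Eu m in 𝓝 (xb, ub), p ∈ svGraph S X →
      ∀ xs us, (xs, -us) ∈ limNormalP (svGraph S X) p →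
        ∀ y ∈ projSet (tangCone X p.1) xs, ‖y‖ ≤ κ * ‖us‖) :=
  lipschitzLikeRel_iff_proj_coderiv_bound_general S X xb ub hX hXconv hloc
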